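/- An R-module M is S-Mittag-Leffler with respect to the class of all flat modules if and only if it is S-Mittag-Leffler with respect to the class of all projective modules, if and only if it is S-Mittag-Leffler with respect to the singleton class {R} (i.e., for every index set I, the canonical map M ⊗_R R^I → M^I has S-torsion kernel). -/

import Mathlib

/-- The canonical map `M ⊗[R] (∀ i, N i) →ₗ[R] ∀ i, M ⊗[R] N i`. -/
noncomputable def tensorPiMap (R : Type*) [CommRing R] (M : Type*) [AddCommGroup M]
    [Module R M] {ι : Type*} (N : ι → Type*) [∀ i, AddCommGroup (N i)]
    [∀ i, Module R (N i)] :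
    (TensorProduct R M (∀ i, N i)) →ₗ[R] (∀ i, TensorProduct R M (N i)) :=
  LinearMap.pi fun i => LinearMap.lTensor M (LinearMap.proj i)

/-- `M` is `S`-Mittag-Leffler with respect to a class `Q` of `R`-modules if for every
family of modules in `Q`, the canonical map `M ⊗ ∏ Qᵢ → ∏ (M ⊗ Qᵢ)` has `S`-torsion kernel. -/
def IsSMittagLeffler (R : Type) [CommRing R] (S : Submonoid R) (M : Type) [AddCommGroup M]
    [Module R M] (Q : ModuleCat R → Prop) : Prop :=
  ∀ (ι : Type) (N : ι → ModuleCat R), (∀ i, Q (N i)) →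
    ∀ x ∈ LinearMap.ker (tensorPiMap R M fun i => (N i : Type)), ∃ s ∈ S, s • x = 0

/-! The inclusions {R} ⊆ projective ⊆ flat make the three conditions successively weaker, so
it suffices to pass from {R} to flat modules. Write an element of the kernel for a family of flat
modules `Nᵢ` as `∑ⱼ mⱼ ⊗ qⱼ`. Each component `∑ⱼ mⱼ ⊗ qⱼ(i)` vanishes in `M ⊗ Nᵢ`, so by the
equational criterion for flatness it vanishes trivially: `qⱼ(i) = ∑ₖ aᵢⱼₖ yᵢₖ` with
`∑ⱼ aᵢⱼₖ mⱼ = 0`. The coefficients then give an element `∑ⱼ mⱼ ⊗ (aᵢⱼₖ)ᵢₖ` of the kernel of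
`M ⊗ R^J → M^J`, `J = Σᵢ Fin kᵢ`, which maps to `∑ⱼ mⱼ ⊗ qⱼ` under `R^J → ∏ Nᵢ, eᵢₖ ↦ yᵢₖ`;
so any `s ∈ S` killing the former kills the latter. -/

open TensorProduct LinearMap

universe u

section tensorPiMap

variable {R : Type*} [CommRing R] {M : Type*} [AddCommGroup M] [Module R M]

@[simp]
lemma tensorPiMap_tmul {ι : Type*} (N : ι → Type*) [∀ i, AddCommGroup (N i)]
    [∀ i, Module R (N i)] (m : M) (q : ∀ i, N i) :
    tensorPiMap R M N (m ⊗ₜ q) = fun i => m ⊗ₜ q i := rfl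

lemma sum_tmul_mem_ker_tensorPiMap_iff {ι κ : Type*} [Fintype κ] {N : ι → Type*}
    [∀ i, AddCommGroup (N i)] [∀ i, Module R (N i)] (m : κ → M) (q : κ → ∀ i, N i) :
    ∑ j, m j ⊗ₜ q j ∈ ker (tensorPiMap R M N) ↔ ∀ i, ∑ j, m j ⊗ₜ[R] q j i = 0 := by
  simp [funext_iff]

lemma sum_tmul_mem_ker_tensorPiMap_self_iff {ι κ : Type*} [Fintype κ] (m : κ → M)
    (c : κ → ι → R) :
    ∑ j, m j ⊗ₜ c j ∈ ker (tensorPiMap R M fun _ : ι => R) ↔ ∀ i, ∑ j, c j i • m j = 0 := by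
  rw [sum_tmul_mem_ker_tensorPiMap_iff]
  refine forall_congr' fun i => ?_
  rw [← (TensorProduct.rid R M).injective.eq_iff]
  simp

lemma vanishesTrivially_of_sum_tmul_eq_zero_of_flat {κ : Type*} [Fintype κ] {N : Type*}
    [AddCommGroup N] [Module R N] [Module.Flat R N] {m : κ → M} {n : κ → N}
    (h : ∑ j, m j ⊗ₜ[R] n j = 0) : VanishesTrivially R m n :=
  vanishesTrivially_of_sum_tmul_eq_zero_of_rTensor_injective R
    (Module.Flat.rTensor_preserves_injective_linearMap _ (Submodule.injective_subtype _)) h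

lemma exists_lTensor_eq_of_mem_ker_tensorPiMap {ι : Type u} {κ : Type*} [Fintype κ]
    {N : ι → Type*} [∀ i, AddCommGroup (N i)] [∀ i, Module R (N i)] [∀ i, Module.Flat R (N i)]
    {m : κ → M} {q : κ → ∀ i, N i} (hq : ∑ j, m j ⊗ₜ q j ∈ ker (tensorPiMap R M N)) :
    ∃ (J : Type u) (w : M ⊗[R] (J → R)) (h : (J → R) →ₗ[R] ∀ i, N i),
      w ∈ ker (tensorPiMap R M fun _ : J => R) ∧ lTensor M h w = ∑ j, m j ⊗ₜ q j := by
  choose k a y hy ham using fun i => vanishesTrivially_of_sum_tmul_eq_zero_of_flat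
    ((sum_tmul_mem_ker_tensorPiMap_iff m q).mp hq i)
  let h : ((Σ i, Fin (k i)) → R) →ₗ[R] ∀ i, N i :=
    LinearMap.pi fun i =>
      Fintype.linearCombination R (y i) ∘ₗ funLeft R R (Sigma.mk (β := fun i => Fin (k i)) i)
  refine ⟨Σ i, Fin (k i), ∑ j, m j ⊗ₜ fun t => a t.1 j t.2, h,
    (sum_tmul_mem_ker_tensorPiMap_self_iff _ _).mpr fun t => ham t.1 t.2, ?_⟩
  simp only [map_sum, lTensor_tmul]
  congr! with j
  ext i
  exact (hy i j).symm

end tensorPiMap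

namespace IsSMittagLeffler

variable {R : Type} [CommRing R] {S : Submonoid R} {M : Type} [AddCommGroup M] [Module R M]

lemma mono {Q Q' : ModuleCat R → Prop} (hQ : ∀ N, Q' N → Q N) (H : IsSMittagLeffler R S M Q) :
    IsSMittagLeffler R S M Q' :=
  fun ι N hN => H ι N fun i => hQ _ (hN i)

lemma flat_of_ring (H : IsSMittagLeffler R S M fun N => Nonempty ((N : Type) ≃ₗ[R] R)) :
    IsSMittagLeffler R S M fun N => Module.Flat R (N : Type) := by
  intro ι N hN x hx
  obtain ⟨T, rfl⟩ := TensorProduct.exists_finset x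
  rw [← Finset.sum_coe_sort] at hx ⊢
  obtain ⟨J, w, h, hw, hwx⟩ := exists_lTensor_eq_of_mem_ker_tensorPiMap hx
  obtain ⟨s, hs, hsw⟩ := H J (fun _ => ModuleCat.of R R) (fun _ => ⟨LinearEquiv.refl R R⟩) w hw
  exact ⟨s, hs, by rw [← hwx, ← map_smul, hsw, map_zero]⟩

end IsSMittagLeffler

theorem s_mittagLeffler_flat_iff_projective_iff_R {R : Type} [CommRing R] (S : Submonoid R)
    {M : Type} [AddCommGroup M] [Module R M] :
    (IsSMittagLeffler R S M (fun N => Module.Flat R (N : Type)) ↔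
      IsSMittagLeffler R S M (fun N => Module.Projective R (N : Type))) ∧
    (IsSMittagLeffler R S M (fun N => Module.Projective R (N : Type)) ↔
      IsSMittagLeffler R S M (fun N => Nonempty ((N : Type) ≃ₗ[R] R))) := by
  have flat_to_proj : IsSMittagLeffler R S M (fun N => Module.Flat R (N : Type)) →
      IsSMittagLeffler R S M (fun N => Module.Projective R (N : Type)) :=
    .mono fun N _ => inferInstance
  have proj_to_ring : IsSMittagLeffler R S M (fun N => Module.Projective R (N : Type)) →
      IsSMittagLeffler R S M (fun N => Nonempty ((N : Type) ≃ₗ[R] R)) :=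
    .mono fun N ⟨e⟩ => .of_equiv e.symm
  exact ⟨⟨flat_to_proj, fun h => (proj_to_ring h).flat_of_ring⟩,
    ⟨proj_to_ring, fun h => flat_to_proj h.flat_of_ring⟩⟩
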